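/- Let ψ(i) denote the ν-almost sure limit of ψ^{(n)}(i). Then ν-almost surely, ψ is a (generalized) eigenfunction of H_β with eigenvalue 0: for every i ∈ V, 2β_i ψ(i) = Σ_{j∼i} W_{i,j} ψ(j), i.e. (H_β ψ)(i) = 0. -/

import Mathlib

/-!
Sorting the exit paths of `V_n` from `i ∈ V_n` by their first step gives, in `[0, ∞]` and
without any summability, `T(i) = Σ_{j∼i} W_{i,j}/(2β_i) · T(j)` for the total weight `T` of exit
paths (with `T(j) = 1` off `V_n`). Taking real parts keeps this identity once all neighbours of
`i` lie in `V_n`: an infinite `T(i)` forces `T(j) = ∞` at every neighbour, and then both sides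
read `0`. Hence `2β_i ψ^{(n)}(i) = Σ_{j∼i} W_{i,j} ψ^{(n)}(j)` for all large `n`; let `n → ∞`.
-/

open MeasureTheory

namespace VRJPStmt

variable {V : Type*} [DecidableEq V]

/-- Right-hand side of the Laplace transform of the random potential `β`, for a finite
window `U`: each non-oriented edge inside `U` is counted once (hence the factor `1/2` in
front of the sum over ordered pairs), and each boundary edge `{i,j}` with `i ∈ U`, `j ∉ U`
is counted once. -/
noncomputable def laplaceRHS (G : SimpleGraph V) [DecidableRel G.Adj]
    [∀ v : V, Fintype (G.neighborSet v)] (W : V → V → ℝ) (U : Finset V) (lam : V → ℝ) : ℝ :=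
  Real.exp
    (-(1/2) * ∑ i ∈ U, ∑ j ∈ U,
        (if G.Adj i j then W i j * (Real.sqrt ((1 + lam i) * (1 + lam j)) - 1) else 0)
      - ∑ i ∈ U, ∑ j ∈ G.neighborFinset i \ U, W i j * (Real.sqrt (1 + lam i) - 1))
    * ∏ i ∈ U, (1 + lam i) ^ (-(1/2) : ℝ)

/-- `ν` is a probability measure on `(0,∞)^V` whose canonical field `(β_i)` has the
prescribed finite-dimensional Laplace transforms. -/
def IsBetaField (G : SimpleGraph V) [DecidableRel G.Adj]
    [∀ v : V, Fintype (G.neighborSet v)] (W : V → V → ℝ)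
    (ν : Measure (V → ℝ)) : Prop :=
  IsProbabilityMeasure ν ∧ (∀ᵐ β ∂ν, ∀ i, 0 < β i) ∧
    ∀ U : Finset V, ∀ lam : V → ℝ, (∀ i, 0 ≤ lam i) →
      ∫ β, Real.exp (-(∑ i ∈ U, lam i * β i)) ∂ν = laplaceRHS G W U lam

/-- Weight `W_σ = Π W_{σ_k, σ_{k+1}}` of a path given as a list of vertices. -/
noncomputable def wWeight (W : V → V → ℝ) (l : List V) : ℝ :=
  ((l.zip l.tail).map (fun p => W p.1 p.2)).prod

/-- `(2β)_σ = Π_{k=0}^m 2 β_{σ_k}`. -/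
noncomputable def twoBetaFull (β : V → ℝ) (l : List V) : ℝ :=
  (l.map (fun k => 2 * β k)).prod

/-- `(2β)^−_σ = Π_{k=0}^{m−1} 2 β_{σ_k}` (all vertices but the last one). -/
noncomputable def twoBetaMinus (β : V → ℝ) (l : List V) : ℝ :=
  (l.dropLast.map (fun k => 2 * β k)).prod

/-- `l` is a path from `i` to `j` for the adjacency relation `A`. -/
def IsWalkList (A : V → V → Prop) (i j : V) (l : List V) : Prop :=
  l ≠ [] ∧ l.head? = some i ∧ l.getLast? = some j ∧ l.Chain' A

/-- Paths from `i` to `j` staying in the set `S`. -/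
def PathsIn (G : SimpleGraph V) (S : Set V) (i j : V) (l : List V) : Prop :=
  IsWalkList G.Adj i j l ∧ ∀ x ∈ l, x ∈ S

/-- Paths starting at `i`, staying in `S` except for the last vertex, which is outside `S`. -/
def ExitPaths (G : SimpleGraph V) (S : Set V) (i : V) (l : List V) : Prop :=
  l ≠ [] ∧ l.head? = some i ∧ l.Chain' G.Adj ∧ (∀ x ∈ l.dropLast, x ∈ S) ∧
    (∀ x, l.getLast? = some x → x ∉ S)

/-- `Ĝ^{(n)}(i,j) = Σ_{σ ∈ 𝒫^{(n)}_{i,j}} W_σ/(2β)_σ` if `i,j ∈ V_n`, `0` otherwise. -/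
noncomputable def GhatN (G : SimpleGraph V) (W : V → V → ℝ) (Vseq : ℕ → Finset V)
    (n : ℕ) (i j : V) (β : V → ℝ) : ℝ :=
  if i ∈ Vseq n ∧ j ∈ Vseq n then
    ∑' l : {l : List V // PathsIn G (↑(Vseq n)) i j l}, wWeight W ↑l / twoBetaFull β ↑l
  else 0

/-- `ψ^{(n)}(i) = Σ_{σ ∈ 𝒫̄^{(n)}_i} W_σ/(2β)^−_σ` if `i ∈ V_n`, `1` otherwise. -/
noncomputable def psiN (G : SimpleGraph V) (W : V → V → ℝ) (Vseq : ℕ → Finset V)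
    (n : ℕ) (i : V) (β : V → ℝ) : ℝ :=
  if i ∈ Vseq n then
    ∑' l : {l : List V // ExitPaths G (↑(Vseq n)) i l}, wWeight W ↑l / twoBetaMinus β ↑l
  else 1

/-- The σ-algebra `ℱ_n` generated by the coordinates `(β_i)_{i ∈ V_n}`. -/
def FiltN (Vseq : ℕ → Finset V) (n : ℕ) : MeasurableSpace (V → ℝ) :=
  MeasurableSpace.comap (fun β (i : {x : V // x ∈ Vseq n}) => β ↑i) inferInstance

/-- `(V_n)` is an increasing exhausting sequence of finite connected subsets of the graph. -/
def IsExhaustion (G : SimpleGraph V) (Vseq : ℕ → Finset V) : Prop :=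
  (∀ n, Vseq n ⊆ Vseq (n+1)) ∧ (∀ n, (G.induce (↑(Vseq n) : Set V)).Connected) ∧
    ∀ x : V, ∃ n, x ∈ Vseq n

end VRJPStmt

namespace VRJPStmt

open scoped ENNReal

variable {V : Type*}

lemma toReal_eq_sum_mul_toReal {ι : Type*} {s : Finset ι} {c : ι → ℝ} {x : ℝ≥0∞}
    {y : ι → ℝ≥0∞} (hc : ∀ j ∈ s, 0 ≤ c j) (hx : x = ∑ j ∈ s, ENNReal.ofReal (c j) * y j)
    (htop : x = ⊤ → ∀ j ∈ s, y j = ⊤) :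
    x.toReal = ∑ j ∈ s, c j * (y j).toReal := by
  by_cases h : x = ⊤
  · rw [h, ENNReal.toReal_top, eq_comm]
    exact Finset.sum_eq_zero fun j hj => by rw [htop h j hj, ENNReal.toReal_top, mul_zero]
  · rw [hx, ENNReal.toReal_sum (ENNReal.sum_ne_top.mp (hx ▸ h))]
    exact Finset.sum_congr rfl fun j hj => by
      rw [ENNReal.toReal_mul, ENNReal.toReal_ofReal (hc j hj)]

noncomputable def pathWeight (W : V → V → ℝ) (β : V → ℝ) (l : List V) : ℝ≥0∞ :=
  ENNReal.ofReal (wWeight W l / twoBetaMinus β l)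

noncomputable def exitSum (G : SimpleGraph V) (W : V → V → ℝ) (β : V → ℝ) (A : Set V) (i : V) :
    ℝ≥0∞ :=
  ∑' l, {l | ExitPaths G A i l}.indicator (pathWeight W β) l

section ExitSums

variable {G : SimpleGraph V} {W : V → V → ℝ} {β : V → ℝ}

lemma wWeight_cons_cons (a b : V) (t : List V) :
    wWeight W (a :: b :: t) = W a b * wWeight W (b :: t) := by
  simp [wWeight]

lemma twoBetaMinus_cons_cons (a b : V) (t : List V) :
    twoBetaMinus β (a :: b :: t) = 2 * β a * twoBetaMinus β (b :: t) := by
  simp [twoBetaMinus]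

lemma wWeight_nonneg (hW : ∀ a b, G.Adj a b → 0 < W a b) :
    ∀ {l : List V}, l.IsChain G.Adj → 0 ≤ wWeight W l
  | [], _ | [_], _ => by simp [wWeight]
  | a :: b :: t, h => by
    rw [List.isChain_cons_cons] at h
    rw [wWeight_cons_cons]
    exact mul_nonneg (hW a b h.1).le (wWeight_nonneg hW h.2)

lemma twoBetaMinus_pos (hβ : ∀ v, 0 < β v) (l : List V) : 0 < twoBetaMinus β l :=
  List.prod_pos fun x hx => by
    obtain ⟨k, -, rfl⟩ := List.mem_map.mp hx
    linarith [hβ k]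

lemma pathWeight_singleton (a : V) : pathWeight W β [a] = 1 := by
  simp [pathWeight, wWeight, twoBetaMinus]

lemma pathWeight_cons_cons {a b : V} (hab : 0 ≤ W a b / (2 * β a)) (t : List V) :
    pathWeight W β (a :: b :: t) =
      ENNReal.ofReal (W a b / (2 * β a)) * pathWeight W β (b :: t) := by
  rw [pathWeight, pathWeight, wWeight_cons_cons, twoBetaMinus_cons_cons, ← div_mul_div_comm,
    ENNReal.ofReal_mul hab]

lemma exitPaths_iff_eq_singleton {A : Set V} {j : V} (hj : j ∉ A) {l : List V} :
    ExitPaths G A j l ↔ l = [j] := by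
  constructor
  · rintro ⟨hne, hhead, -, hdrop, -⟩
    obtain ⟨a, t, rfl⟩ := List.exists_cons_of_ne_nil hne
    obtain rfl : a = j := by simpa using hhead
    cases t with
    | nil => rfl
    | cons b t => exact absurd (hdrop a (by simp)) hj
  · rintro rfl
    exact ⟨by simp, by simp, List.isChain_singleton j, by simp, by simpa using hj⟩

lemma exitSum_of_notMem {A : Set V} {j : V} (hj : j ∉ A) : exitSum G W β A j = 1 := by
  simp_rw [exitSum, exitPaths_iff_eq_singleton hj, Set.ofPred_eq_eq_singleton]
  rw [← tsum_subtype, tsum_singleton, pathWeight_singleton]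

lemma exitPaths_cons_cons_iff {A : Set V} {i j : V} (hi : i ∈ A) {t : List V} :
    ExitPaths G A i (i :: j :: t) ↔ G.Adj i j ∧ ExitPaths G A j (j :: t) := by
  constructor
  · rintro ⟨-, -, hch, hdrop, hlast⟩
    refine ⟨(List.isChain_cons_cons.mp hch).1, by simp, by simp, (List.isChain_cons_cons.mp hch).2,
      fun x hx => hdrop x ?_, fun x hx => hlast x ?_⟩
    · rw [List.dropLast_cons_cons]
      exact List.mem_cons_of_mem _ hx
    · rwa [List.getLast?_cons_cons]
  · rintro ⟨hadj, -, -, hch, hdrop, hlast⟩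
    refine ⟨by simp, by simp, List.isChain_cons_cons.mpr ⟨hadj, hch⟩, fun x hx => ?_,
      fun x hx => hlast x ?_⟩
    · rw [List.dropLast_cons_cons, List.mem_cons] at hx
      rcases hx with rfl | hx
      exacts [hi, hdrop x hx]
    · rwa [List.getLast?_cons_cons] at hx

/-- A non-summable real `tsum` is `0`, and so is `∞.toReal`: no summability is needed. -/
lemma psiN_eq_toReal_exitSum [DecidableEq V] (hW : ∀ a b, G.Adj a b → 0 < W a b)
    (hβ : ∀ v, 0 < β v) (Vseq : ℕ → Finset V) (n : ℕ) (i : V) :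
    psiN G W Vseq n i β = (exitSum G W β (Vseq n) i).toReal := by
  by_cases hi : i ∈ Vseq n
  · rw [psiN, if_pos hi, exitSum, ← tsum_subtype,
      ENNReal.tsum_toReal_eq (f := fun l : {l | ExitPaths G (Vseq n) i l} => pathWeight W β l)
        fun _ => ENNReal.ofReal_ne_top]
    exact tsum_congr fun l => (ENNReal.toReal_ofReal (div_nonneg
      (wWeight_nonneg hW l.2.2.2.1) (twoBetaMinus_pos hβ l).le)).symm
  · rw [psiN, if_neg hi, exitSum_of_notMem (by simpa using hi), ENNReal.toReal_one]

variable [∀ v, Fintype (G.neighborSet v)]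

lemma indicator_exitPaths_cons (hW : ∀ a b, G.Adj a b → 0 < W a b) (hβ : ∀ v, 0 < β v)
    {A : Set V} {i : V} (hi : i ∈ A) (t : List V) :
    {l | ExitPaths G A i l}.indicator (pathWeight W β) (i :: t) =
      ∑ j ∈ G.neighborFinset i,
        ENNReal.ofReal (W i j / (2 * β i)) *
          {l | ExitPaths G A j l}.indicator (pathWeight W β) t := by
  have hstart : ∀ {k l}, ExitPaths G A k l → l.head? = some k := fun h => h.2.1
  cases t with
  | nil =>
    have hnot : ¬ ExitPaths G A i [i] := fun h => h.2.2.2.2 i rfl hi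
    simp [hnot, fun k => show ¬ ExitPaths G A k [] from fun h => h.1 rfl]
  | cons j t =>
    have hother : ∀ k ∈ G.neighborFinset i, k ≠ j →
        ENNReal.ofReal (W i k / (2 * β i)) *
          {l | ExitPaths G A k l}.indicator (pathWeight W β) (j :: t) = 0 := fun k _ hkj => by
      rw [Set.indicator_of_notMem fun h => hkj (by simpa using (hstart h).symm), mul_zero]
    by_cases hadj : G.Adj i j
    · rw [Finset.sum_eq_single_of_mem j (by simpa using hadj) hother]
      have hc : 0 ≤ W i j / (2 * β i) := div_nonneg (hW i j hadj).le (by linarith [hβ i])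
      by_cases hp : ExitPaths G A j (j :: t)
      · rw [Set.indicator_of_mem (s := {l | ExitPaths G A i l})
            ((exitPaths_cons_cons_iff hi).mpr ⟨hadj, hp⟩),
          Set.indicator_of_mem (s := {l | ExitPaths G A j l}) hp, pathWeight_cons_cons hc]
      · rw [Set.indicator_of_notMem (s := {l | ExitPaths G A i l})
            fun h => hp ((exitPaths_cons_cons_iff hi).mp h).2,
          Set.indicator_of_notMem (s := {l | ExitPaths G A j l}) hp, mul_zero]
    · rw [Set.indicator_of_notMem (s := {l | ExitPaths G A i l})
          fun h => hadj ((exitPaths_cons_cons_iff hi).mp h).1,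
        Finset.sum_eq_zero fun k hk => hother k hk fun hkj => hadj (by simpa [hkj] using hk)]

theorem exitSum_eq_sum (hW : ∀ a b, G.Adj a b → 0 < W a b) (hβ : ∀ v, 0 < β v)
    {A : Set V} {i : V} (hi : i ∈ A) :
    exitSum G W β A i =
      ∑ j ∈ G.neighborFinset i, ENNReal.ofReal (W i j / (2 * β i)) * exitSum G W β A j := by
  have hsupp : Function.support ({l | ExitPaths G A i l}.indicator (pathWeight W β)) ⊆
      Set.range (List.cons i) := fun l hl => by
    obtain ⟨hne, hhead, -⟩ := Set.mem_of_indicator_ne_zero hl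
    obtain ⟨a, t, rfl⟩ := List.exists_cons_of_ne_nil hne
    obtain rfl : a = i := by simpa using hhead
    exact ⟨t, rfl⟩
  rw [exitSum, ← List.cons_injective.tsum_eq hsupp]
  simp_rw [indicator_exitPaths_cons hW hβ hi]
  rw [Summable.tsum_finsetSum fun _ _ => ENNReal.summable]
  simp_rw [ENNReal.tsum_mul_left, exitSum]

lemma exitSum_eq_top_of_adj (hW : ∀ a b, G.Adj a b → 0 < W a b) (hβ : ∀ v, 0 < β v)
    {A : Set V} {i j : V} (hj : j ∈ A) (hadj : G.Adj j i) (h : exitSum G W β A i = ∞) :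
    exitSum G W β A j = ∞ := by
  have hc : ENNReal.ofReal (W j i / (2 * β j)) ≠ 0 :=
    (ENNReal.ofReal_pos.mpr (div_pos (hW j i hadj) (by linarith [hβ j]))).ne'
  refine top_unique ?_
  calc ∞ = ENNReal.ofReal (W j i / (2 * β j)) * exitSum G W β A i := by
        rw [h, ENNReal.mul_top hc]
    _ ≤ exitSum G W β A j := by
      rw [exitSum_eq_sum hW hβ hj]
      exact Finset.single_le_sum (f := fun k => ENNReal.ofReal (W j k / (2 * β j)) *
        exitSum G W β A k) (fun _ _ => zero_le) ((G.mem_neighborFinset j i).mpr hadj)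

theorem two_mul_psiN_eq_sum [DecidableEq V] (hW : ∀ a b, G.Adj a b → 0 < W a b)
    (hβ : ∀ v, 0 < β v) {Vseq : ℕ → Finset V} {n : ℕ} {i : V}
    (hi : i ∈ Vseq n) (hnb : G.neighborFinset i ⊆ Vseq n) :
    2 * β i * psiN G W Vseq n i β = ∑ j ∈ G.neighborFinset i, W i j * psiN G W Vseq n j β := by
  have h2β : 0 < 2 * β i := by linarith [hβ i]
  simp_rw [psiN_eq_toReal_exitSum hW hβ]
  rw [toReal_eq_sum_mul_toReal (fun j hj => div_nonneg (hW i j (by simpa using hj)).le h2β.le)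
    (exitSum_eq_sum hW hβ (Finset.mem_coe.mpr hi))
    (fun h j hj => exitSum_eq_top_of_adj hW hβ (Finset.mem_coe.mpr (hnb hj))
      ((G.mem_neighborFinset i j).mp hj).symm h), Finset.mul_sum]
  exact Finset.sum_congr rfl fun j _ => by rw [← mul_assoc, mul_div_cancel₀ _ h2β.ne']

end ExitSums

lemma IsExhaustion.countable {G : SimpleGraph V} {Vseq : ℕ → Finset V}
    (h : IsExhaustion G Vseq) : Countable V := by
  rw [← Set.countable_univ_iff, show Set.univ = ⋃ n, (Vseq n : Set V) by
    ext x; simpa using h.2.2 x]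
  exact Set.countable_iUnion fun n => (Vseq n).countable_toSet

lemma IsExhaustion.eventually_subset {G : SimpleGraph V} {Vseq : ℕ → Finset V}
    (h : IsExhaustion G Vseq) (s : Finset V) : ∀ᶠ n in Filter.atTop, s ⊆ Vseq n := by
  have hmono : Monotone Vseq := monotone_nat_of_le_succ h.1
  refine (Filter.eventually_all_finset s).mpr fun x _ => ?_
  obtain ⟨n₀, hx⟩ := h.2.2 x
  exact Filter.eventually_atTop.mpr ⟨n₀, fun n hn => hmono hn hx⟩

/-- Let `ψ(i)` be the `ν`-a.s. limit of `ψ^{(n)}(i)`. Then `ν`-a.s., `ψ`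
is a generalized eigenfunction of `H_β` with eigenvalue `0`: for every `i ∈ V`,
`2 β_i ψ(i) = Σ_{j∼i} W_{i,j} ψ(j)`, i.e. `(H_β ψ)(i) = 0`. -/
theorem stmt18 {V : Type*} [DecidableEq V] [Infinite V] (G : SimpleGraph V)
    [DecidableRel G.Adj] [∀ v : V, Fintype (G.neighborSet v)] (hconn : G.Connected)
    (W : V → V → ℝ) (hWsymm : ∀ i j, W i j = W j i) (hWpos : ∀ i j, G.Adj i j → 0 < W i j)
    (ν : MeasureTheory.Measure (V → ℝ)) (hν : IsBetaField G W ν)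
    (Vseq : ℕ → Finset V) (hVseq : IsExhaustion G Vseq)
    (ψ : V → (V → ℝ) → ℝ)
    (hψ : ∀ i, ∀ᵐ β ∂ν,
      Filter.Tendsto (fun n => psiN G W Vseq n i β) Filter.atTop (nhds (ψ i β))) :
    ∀ᵐ β ∂ν, ∀ i : V,
      2 * β i * ψ i β = ∑ j ∈ G.neighborFinset i, W i j * ψ j β := by
  have := hVseq.countable
  filter_upwards [hν.2.1, ae_all_iff.mpr hψ] with β hβ hlim i
  have hrec : ∀ᶠ n in Filter.atTop, 2 * β i * psiN G W Vseq n i β =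
      ∑ j ∈ G.neighborFinset i, W i j * psiN G W Vseq n j β := by
    filter_upwards [hVseq.eventually_subset (insert i (G.neighborFinset i))] with n hn
    exact two_mul_psiN_eq_sum hWpos hβ (hn (Finset.mem_insert_self _ _))
      ((Finset.subset_insert _ _).trans hn)
  exact tendsto_nhds_unique (((hlim i).const_mul _).congr' hrec)
    (tendsto_finsetSum _ fun j _ => (hlim j).const_mul _)

end VRJPStmt
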